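/- Let M = 2^m and t ≤ m. In the t-fold recursive Cooley–Tukey decomposition of the M-point inverse DFT into 2^t parallel 2^{m−t}-point inverse DFTs, the input sequence fed into the d'-th sub-IDFT (d' ∈ {0,...,2^t−1}) consists exactly of the entries X[d + j·2^t] for j = 0,...,2^{m−t}−1, where d = ρ_t(d') is the t-bit bit-reversal of d'. Formally: for all ℓ ∈ {0,...,M−1}, (IDFT_M X)[ℓ] = (1/2^t)·Σ_{d'=0}^{2^t−1} e^{2πiℓ·ρ_t(d')/M}·(IDFT_{2^{m−t}} Y^{d'})[ℓ mod 2^{m−t}], where Y^{d'}[j] = X[ρ_t(d') + j·2^t]. -/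
import Mathlib


open Complex Finset

/-- `idft M X ℓ = (1/M) Σ_{k<M} X k · e^{2πi k ℓ / M}` -/
noncomputable def idft (M : ℕ) (X : ℕ → ℂ) (ℓ : ℕ) : ℂ :=
  (1 / (M : ℂ)) * ∑ k ∈ Finset.range M, X k * Complex.exp (2 * Real.pi * Complex.I * k * ℓ / M)

/-- `bitRev t k` is the `t`-bit bit-reversal of `k`. -/
def bitRev (t k : ℕ) : ℕ :=
  ∑ i ∈ Finset.range t, (k / 2 ^ i % 2) * 2 ^ (t - 1 - i)

lemma bitRev_succ (t k : ℕ) : bitRev (t+1) k = bitRev t (k / 2) + (k % 2) * 2 ^ t := by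
  rw [bitRev, bitRev, Finset.sum_range_succ']
  simp only [pow_zero, Nat.div_one, Nat.add_sub_cancel, Nat.sub_zero]
  congr 1
  apply Finset.sum_congr rfl
  intro i hi
  rw [Nat.div_div_eq_div_mul, ← pow_succ']
  congr 2
  omega

lemma bitRev_succ' (t k : ℕ) : bitRev (t+1) k = 2 * bitRev t k + k / 2 ^ t % 2 := by
  rw [bitRev, bitRev, Finset.sum_range_succ]
  simp only [Nat.add_sub_cancel, Nat.sub_self, pow_zero, mul_one]
  rw [Finset.mul_sum]
  congr 1
  apply Finset.sum_congr rfl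
  intro i hi
  have hi' : i < t := Finset.mem_range.mp hi
  have : t - i = (t - 1 - i) + 1 := by omega
  rw [this, pow_succ]
  ring

lemma bitRev_lt (t k : ℕ) : bitRev t k < 2 ^ t := by
  induction t generalizing k with
  | zero => simp [bitRev]
  | succ t ih =>
    rw [bitRev_succ]
    have h1 := ih (k / 2)
    have h2 : k % 2 < 2 := Nat.mod_lt _ (by norm_num)
    have h3 : k % 2 * 2 ^ t ≤ 1 * 2 ^ t := Nat.mul_le_mul_right _ (by omega)
    have : 2 ^ (t+1) = 2 ^ t + 2 ^ t := by rw [pow_succ]; omega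
    omega

lemma bitRev_mod (t n : ℕ) : bitRev t (n % 2 ^ t) = bitRev t n := by
  apply Finset.sum_congr rfl
  intro i hi
  have hi' : i < t := Finset.mem_range.mp hi
  congr 1
  have hdiv : n / 2 ^ i = 2 ^ (t - i) * (n / 2 ^ t) + (n % 2 ^ t) / 2 ^ i := by
    conv_lhs => rw [← Nat.mod_add_div n (2 ^ t)]
    have h2t : (2:ℕ) ^ t = 2 ^ i * 2 ^ (t - i) := by rw [← pow_add]; congr 1; omega
    rw [h2t, mul_assoc, Nat.add_mul_div_left _ _ (by positivity)]
    ring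
  have h2 : 2 ^ (t - i) = 2 * 2 ^ (t - i - 1) := by
    rw [← pow_succ']; congr 1; omega
  rw [hdiv, h2, mul_assoc, Nat.mul_add_mod]

lemma bitRev_bitRev (t : ℕ) : ∀ k < 2 ^ t, bitRev t (bitRev t k) = k := by
  induction t with
  | zero => intro k hk; interval_cases k; simp [bitRev]
  | succ t ih =>
    intro k hk
    rw [bitRev_succ t k, bitRev_succ']
    have hb : bitRev t (k / 2) < 2 ^ t := bitRev_lt t (k / 2)
    have hm : k % 2 < 2 := Nat.mod_lt _ (by norm_num)
    have hdiv : (bitRev t (k / 2) + k % 2 * 2 ^ t) / 2 ^ t = k % 2 := by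
      rw [Nat.add_mul_div_right _ _ (by positivity), Nat.div_eq_of_lt hb, zero_add]
    have hmod : (bitRev t (k / 2) + k % 2 * 2 ^ t) % 2 ^ t = bitRev t (k / 2) := by
      rw [Nat.add_mul_mod_self_right, Nat.mod_eq_of_lt hb]
    have hkey : bitRev t (bitRev t (k / 2) + k % 2 * 2 ^ t) = k / 2 := by
      rw [← bitRev_mod, hmod, ih (k / 2) (by omega)]
    rw [hkey, hdiv]
    omega

lemma sum_bitRev (t : ℕ) (f : ℕ → ℂ) :
    ∑ d' ∈ Finset.range (2 ^ t), f (bitRev t d') = ∑ d ∈ Finset.range (2 ^ t), f d := by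
  refine Finset.sum_nbij' (bitRev t) (bitRev t) ?_ ?_ ?_ ?_ (fun a _ => rfl)
  · exact fun a _ => Finset.mem_range.mpr (bitRev_lt t a)
  · exact fun a _ => Finset.mem_range.mpr (bitRev_lt t a)
  · exact fun a ha => bitRev_bitRev t a (Finset.mem_range.mp ha)
  · exact fun a ha => bitRev_bitRev t a (Finset.mem_range.mp ha)

lemma sum_range_mul_split (T N : ℕ) (hT : 0 < T) (f : ℕ → ℂ) :
    ∑ k ∈ Finset.range (T * N), f k
      = ∑ d ∈ Finset.range T, ∑ j ∈ Finset.range N, f (d + j * T) := by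
  rw [← Finset.sum_product']
  refine Finset.sum_nbij' (fun k => (k % T, k / T)) (fun p => p.1 + p.2 * T) ?_ ?_ ?_ ?_ ?_
  · intro k hk
    simp only [Finset.mem_range, Finset.mem_product] at *
    exact ⟨Nat.mod_lt _ hT, Nat.div_lt_of_lt_mul hk⟩
  · intro p hp
    simp only [Finset.mem_range, Finset.mem_product] at *
    calc p.1 + p.2 * T < T + p.2 * T := by omega
      _ = (p.2 + 1) * T := by ring
      _ ≤ N * T := Nat.mul_le_mul_right _ (Nat.succ_le_of_lt hp.2)
      _ = T * N := Nat.mul_comm _ _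
  · intro k hk; exact Nat.mod_add_div' k T
  · intro p hp
    simp only [Finset.mem_range, Finset.mem_product] at hp
    simp [Nat.add_mul_mod_self_right, Nat.mod_eq_of_lt hp.1,
      Nat.add_mul_div_right _ _ hT, Nat.div_eq_of_lt hp.1]
  · intro k hk; simp [Nat.mod_add_div' k T]

lemma exp_split (m t : ℕ) (ht : t ≤ m) (ℓ d j : ℕ) :
    Complex.exp (2 * Real.pi * Complex.I * ((d + j * 2 ^ t : ℕ) : ℂ) * ℓ / ((2 ^ m : ℕ) : ℂ))
      = Complex.exp (2 * Real.pi * Complex.I * ℓ * d / ((2 ^ m : ℕ) : ℂ)) *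
        Complex.exp (2 * Real.pi * Complex.I * j * ((ℓ % 2 ^ (m - t) : ℕ) : ℂ) / ((2 ^ (m - t) : ℕ) : ℂ)) := by
  have hM : (2 : ℂ) ^ m = 2 ^ t * 2 ^ (m - t) := by rw [← pow_add]; congr 1; omega
  have hN0 : (2 : ℂ) ^ (m - t) ≠ 0 := pow_ne_zero _ two_ne_zero
  have hT0 : (2 : ℂ) ^ t ≠ 0 := pow_ne_zero _ two_ne_zero
  have hℓ : (ℓ : ℂ) = ((ℓ % 2 ^ (m - t) : ℕ) : ℂ) + (2 : ℂ) ^ (m - t) * ((ℓ / 2 ^ (m - t) : ℕ) : ℂ) := by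
    have := congrArg (Nat.cast : ℕ → ℂ) (Nat.mod_add_div ℓ (2 ^ (m - t)))
    push_cast at this
    linear_combination -this
  have key : 2 * (Real.pi : ℂ) * Complex.I * ((d + j * 2 ^ t : ℕ) : ℂ) * ℓ / ((2 ^ m : ℕ) : ℂ)
      = 2 * (Real.pi : ℂ) * Complex.I * ℓ * d / ((2 ^ m : ℕ) : ℂ)
        + (2 * (Real.pi : ℂ) * Complex.I * j * ((ℓ % 2 ^ (m - t) : ℕ) : ℂ) / ((2 ^ (m - t) : ℕ) : ℂ)
          + ((j * (ℓ / 2 ^ (m - t)) : ℕ) : ℂ) * (2 * Real.pi * Complex.I)) := by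
    push_cast
    rw [hℓ, hM]
    field_simp
  rw [key, Complex.exp_add, Complex.exp_add]
  have h1 : Complex.exp (((j * (ℓ / 2 ^ (m - t)) : ℕ) : ℂ) * (2 * Real.pi * Complex.I)) = 1 := by
    exact_mod_cast Complex.exp_int_mul_two_pi_mul_I ((j * (ℓ / 2 ^ (m - t)) : ℕ) : ℤ)
  rw [h1, mul_one]

theorem stmt7 (m t : ℕ) (ht : t ≤ m) (X : ℕ → ℂ) :
    ∀ ℓ < 2 ^ m,
      idft (2 ^ m) X ℓ =
        (1 / (2 ^ t : ℂ)) * ∑ d' ∈ Finset.range (2 ^ t),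
          Complex.exp (2 * Real.pi * Complex.I * ℓ * (bitRev t d') / ((2 ^ m : ℕ) : ℂ)) *
            idft (2 ^ (m - t)) (fun j => X (bitRev t d' + j * 2 ^ t)) (ℓ % 2 ^ (m - t)) := by
  intro ℓ hℓ
  rw [sum_bitRev t (fun d => Complex.exp (2 * Real.pi * Complex.I * ℓ * d / ((2 ^ m : ℕ) : ℂ)) *
        idft (2 ^ (m - t)) (fun j => X (d + j * 2 ^ t)) (ℓ % 2 ^ (m - t)))]
  have hMT : (2 : ℕ) ^ m = 2 ^ t * 2 ^ (m - t) := by rw [← pow_add]; congr 1; omega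
  have hL : idft (2 ^ m) X ℓ
      = (1 / ((2 ^ m : ℕ) : ℂ)) * ∑ d ∈ Finset.range (2 ^ t), ∑ j ∈ Finset.range (2 ^ (m - t)),
          X (d + j * 2 ^ t) *
            (Complex.exp (2 * Real.pi * Complex.I * ℓ * d / ((2 ^ m : ℕ) : ℂ)) *
             Complex.exp (2 * Real.pi * Complex.I * j * ((ℓ % 2 ^ (m - t) : ℕ) : ℂ) / ((2 ^ (m - t) : ℕ) : ℂ))) := by
    unfold idft
    congr 1
    rw [show Finset.range (2 ^ m) = Finset.range (2 ^ t * 2 ^ (m - t)) by rw [← hMT]]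
    rw [sum_range_mul_split _ _ (by positivity)]
    refine Finset.sum_congr rfl fun d _ => Finset.sum_congr rfl fun j _ => ?_
    rw [exp_split m t ht ℓ d j]
  rw [hL]
  unfold idft
  rw [Finset.mul_sum, Finset.mul_sum]
  refine Finset.sum_congr rfl fun d _ => ?_
  rw [Finset.mul_sum, Finset.mul_sum, Finset.mul_sum, Finset.mul_sum]
  refine Finset.sum_congr rfl fun j _ => ?_
  have hMc : ((2 ^ m : ℕ) : ℂ) = (2 ^ t : ℂ) * ((2 ^ (m - t) : ℕ) : ℂ) := by
    push_cast
    rw [← pow_add]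
    congr 1
    omega
  rw [hMc]
  ring
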